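/- arXiv:2208.04893 — 7 statements merged into one kernel-verified Lean document; each statement's English description precedes it below -/
import Mathlib

section
/- Let M be a matroid on E and A ⊆ E. Then cusp(A) = ∅ if and only if A is independent in M or A is spanning in M (equivalently, E∖A is independent in the dual matroid M*). -/
open Set

variable {α : Type*}

/-- The (natural-number valued) rank of a set `X` in a matroid `M`:
the maximum cardinality of an independent subset of `X`. -/
noncomputable def Matroid.nrk (M : Matroid α) (X : Set α) : ℕ :=
  sSup (Set.ncard '' {I | M.Indep I ∧ I ⊆ X})

/-- The rank of the matroid `M`. -/
noncomputable def Matroid.nRank (M : Matroid α) : ℕ := M.nrk M.E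

/-- The cusp of a subset `A` in a matroid `M` of rank `k`:
all `k`-element subsets `S` of the ground set with `|S ∩ A| ≥ rk A + 1`. -/
def Matroid.cusp (M : Matroid α) (A : Set α) : Set (Set α) :=
  {S | S ⊆ M.E ∧ S.ncard = M.nRank ∧ M.nrk A + 1 ≤ (S ∩ A).ncard}

/-- A subset `A` of a matroid `M` is stressed if both the restriction `M | A`
and the contraction `M / A` are uniform matroids; for a finite matroid this is
equivalent to the rank functions of the restriction and of the contraction being
those of uniform matroids. -/
def Matroid.StressedSubset (M : Matroid α) (A : Set α) : Prop :=
  (∀ S ⊆ A, M.nrk S = min S.ncard (M.nrk A)) ∧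
  (∀ Y ⊆ M.E \ A, M.nrk (A ∪ Y) = M.nrk A + min Y.ncard (M.nRank - M.nrk A))

namespace Matroid

variable {M : Matroid α} {A B I X : Set α}

lemma bddAbove_ncard_indep_subset [M.RankFinite] (X : Set α) :
    BddAbove (Set.ncard '' {I | M.Indep I ∧ I ⊆ X}) := by
  obtain ⟨B, hB⟩ := M.exists_isBase
  refine ⟨B.ncard, ?_⟩
  rintro _ ⟨I, ⟨hI, -⟩, rfl⟩
  rw [ncard_def, ncard_def]
  exact ENat.toNat_le_toNat (hB.encard_eq_eRank ▸ hI.encard_le_eRank) hB.finite.encard_lt_top.ne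

lemma Indep.ncard_le_nrk [M.RankFinite] (hI : M.Indep I) (hIX : I ⊆ X) : I.ncard ≤ M.nrk X :=
  le_csSup (bddAbove_ncard_indep_subset X) ⟨I, ⟨hI, hIX⟩, rfl⟩

lemma IsBasis'.nrk_eq_ncard [M.RankFinite] (hI : M.IsBasis' I X) : M.nrk X = I.ncard := by
  refine le_antisymm (csSup_le ⟨0, ∅, ⟨M.empty_indep, empty_subset X⟩, ncard_empty α⟩ ?_)
    (hI.indep.ncard_le_nrk hI.subset)
  rintro _ ⟨J, ⟨hJ, hJX⟩, rfl⟩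
  rw [ncard_def, ncard_def]
  exact ENat.toNat_le_toNat (hI.encard_eq_eRk ▸ hJ.encard_le_eRk_of_subset hJX)
    hI.indep.finite.encard_lt_top.ne

lemma IsBase.nRank_eq_ncard [M.RankFinite] (hB : M.IsBase B) : M.nRank = B.ncard :=
  hB.isBasis_ground.isBasis'.nrk_eq_ncard

lemma cusp_eq_empty_of_indep [M.RankFinite] (hA : M.Indep A) : M.cusp A = ∅ := by
  refine eq_empty_of_forall_notMem ?_
  rintro S ⟨-, -, hS⟩
  have := (hA.subset inter_subset_right).ncard_le_nrk (inter_subset_right : S ∩ A ⊆ A)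
  omega

lemma cusp_eq_empty_of_spanning [M.Finite] (hA : M.Spanning A) : M.cusp A = ∅ := by
  refine eq_empty_of_forall_notMem ?_
  rintro S ⟨hSE, hScard, hS⟩
  obtain ⟨B, hB, hBA⟩ := hA.exists_isBase_subset
  have hrank : M.nRank ≤ M.nrk A := hB.nRank_eq_ncard ▸ hB.indep.ncard_le_nrk hBA
  have hinter : (S ∩ A).ncard ≤ S.ncard := ncard_le_ncard inter_subset_left (M.set_finite S hSE)
  omega

lemma cusp_nonempty_of_not_indep_of_not_spanning [M.RankFinite] (hA : A ⊆ M.E)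
    (hAi : ¬ M.Indep A) (hAs : ¬ M.Spanning A) :
    (M.cusp A).Nonempty := by
  obtain ⟨I, hI⟩ := M.exists_isBasis A
  obtain ⟨B, hB, hIB⟩ := hI.indep.exists_isBase_superset
  obtain ⟨a, haA, haI⟩ : (A \ I).Nonempty :=
    sdiff_nonempty.2 fun hAI ↦ hAi (hI.indep.subset hAI)
  obtain ⟨b, hbB, hbI⟩ : (B \ I).Nonempty :=
    sdiff_nonempty.2 fun hBI ↦ hAs ((hB.spanning.superset hBI).superset hI.subset)
  -- `B ∩ A` is independent and contains the basis `I` of `A`, so it equals `I`.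
  have haB : a ∉ B := fun haB ↦ haI (hI.inter_eq_of_subset_indep hIB hB.indep ▸ ⟨haB, haA⟩)
  refine ⟨insert a (B \ {b}), insert_subset (hA haA) (sdiff_subset.trans hB.subset_ground),
    (ncard_exchange haB hbB).trans hB.nRank_eq_ncard.symm, ?_⟩
  have hsub : insert a I ⊆ insert a (B \ {b}) ∩ A :=
    insert_subset ⟨mem_insert a _, haA⟩
      fun x hx ↦ ⟨mem_insert_of_mem a ⟨hIB hx, fun hxb ↦ hbI (hxb ▸ hx)⟩, hI.subset hx⟩
  calc M.nrk A + 1 = (insert a I).ncard := by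
        rw [hI.isBasis'.nrk_eq_ncard, ncard_insert_of_notMem haI hI.indep.finite]
    _ ≤ (insert a (B \ {b}) ∩ A).ncard :=
        ncard_le_ncard hsub ((hB.finite.sdiff.insert a).inter_of_left A)

end Matroid

/-- the cusp of `A` is empty if and only if `A` is independent in `M`
or `A` is spanning in `M`. -/
theorem cusp_eq_empty_iff (M : Matroid α) (hfin : M.E.Finite) {A : Set α}
    (hA : A ⊆ M.E) :
    M.cusp A = ∅ ↔ M.Indep A ∨ M.Spanning A := by
  have : M.Finite := ⟨hfin⟩
  refine ⟨fun hcusp ↦ ?_, ?_⟩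
  · by_contra! h
    exact (M.cusp_nonempty_of_not_indep_of_not_spanning hA h.1 h.2).ne_empty hcusp
  · rintro (hAi | hAs)
    exacts [M.cusp_eq_empty_of_indep hAi, M.cusp_eq_empty_of_spanning hAs]
end

section
/- Let M be a matroid on E and A ⊆ E. A set S belongs to the cusp of A computed in the dual matroid M* if and only if its complement E∖S belongs to the cusp of E∖A computed in M. -/
open Set

variable {α : Type*}

/-! Both cusp conditions are linear in cardinalities and ranks. The dual rank formula
`rk✶ A + rk M = rk (E ∖ A) + |A|`, the identity `rk M + rk M✶ = |E|` and
`|(E ∖ S) ∩ (E ∖ A)| = |E| - |S ∪ A|` turn either condition into the other. -/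

namespace Matroid

lemma IsRkFinite.cast_nrk_eq_eRk {M : Matroid α} {X : Set α} (hX : M.IsRkFinite X) :
    (M.nrk X : ℕ∞) = M.eRk X := by
  obtain ⟨I, hI, hIfin⟩ := hX.exists_finite_isBasis'
  suffices hmax : IsGreatest (ncard '' {J | M.Indep J ∧ J ⊆ X}) I.ncard by
    rw [nrk, hmax.csSup_eq, hIfin.cast_ncard_eq, hI.encard_eq_eRk]
  refine ⟨⟨I, ⟨hI.indep, hI.subset⟩, rfl⟩, ?_⟩
  rintro _ ⟨J, ⟨hJ, hJX⟩, rfl⟩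
  have hJfin : J.Finite := hX.finite_of_indep_subset hJ hJX
  have hJI : J.encard ≤ I.encard := hI.encard_eq_eRk ▸ hJ.encard_le_eRk_of_subset hJX
  rwa [← hJfin.cast_ncard_eq, ← hIfin.cast_ncard_eq, Nat.cast_le] at hJI

lemma cast_nRank_eq_eRank (M : Matroid α) [M.RankFinite] : (M.nRank : ℕ∞) = M.eRank := by
  rw [nRank, M.isRkFinite_ground.cast_nrk_eq_eRk, eRank_def]

lemma dual_nrk_add_nRank (M : Matroid α) [M.RankFinite] {X : Set α} (hX : X.Finite)
    (hXE : X ⊆ M.E) : M✶.nrk X + M.nRank = M.nrk (M.E \ X) + X.ncard := by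
  apply Nat.cast_injective (R := ℕ∞)
  push_cast
  rw [(M✶.isRkFinite_of_finite hX).cast_nrk_eq_eRk, cast_nRank_eq_eRank,
    (M.isRkFinite_set _).cast_nrk_eq_eRk, hX.cast_ncard_eq, M.eRk_dual_add_eRank X hXE]

lemma nRank_add_dual_nRank (M : Matroid α) [M.Finite] : M.nRank + M✶.nRank = M.E.ncard := by
  apply Nat.cast_injective (R := ℕ∞)
  push_cast
  rw [cast_nRank_eq_eRank, cast_nRank_eq_eRank, M.ground_finite.cast_ncard_eq,
    eRank_add_eRank_dual]

end Matroid

/-- `S` belongs to the cusp of `A` computed in the dual matroid `M✶`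
if and only if `E ∖ S` belongs to the cusp of `E ∖ A` computed in `M`. -/
theorem mem_cusp_dual_iff (M : Matroid α) (hfin : M.E.Finite) {A S : Set α}
    (hA : A ⊆ M.E) (hS : S ⊆ M.E) :
    S ∈ M✶.cusp A ↔ M.E \ S ∈ M.cusp (M.E \ A) := by
  have : M.Finite := ⟨hfin⟩
  have hrk := M.dual_nrk_add_nRank (hfin.subset hA) hA
  have hrank := M.nRank_add_dual_nRank
  have hS_compl : (M.E \ S).ncard + S.ncard = M.E.ncard := ncard_sdiff_add_ncard_of_subset hS hfin
  have hSA : (S ∩ A).ncard + (S ∪ A).ncard = S.ncard + A.ncard :=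
    ncard_inter_add_ncard_union S A (hfin.subset hS) (hfin.subset hA)
  have hSA_compl : (M.E \ (S ∪ A)).ncard + (S ∪ A).ncard = M.E.ncard :=
    ncard_sdiff_add_ncard_of_subset (union_subset hS hA) hfin
  simp only [Matroid.cusp, mem_ofPred_eq, Matroid.dual_ground, sdiff_inter_sdiff]
  constructor
  · rintro ⟨-, hcard, hrkA⟩
    exact ⟨sdiff_subset, by omega, by omega⟩
  · rintro ⟨-, hcard, hrkA⟩
    exact ⟨hS, by omega, by omega⟩
end

section
/- Let M be a matroid of rank k on E with a stressed subset F of rank r, and let A ⊆ E satisfy |A ∩ F| ≥ r + 1. Then rk_M(A) = min(k, r + |A ∖ F|). -/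
open Set

variable {α : Type*}

/-! `Matroid.nrk` agrees with Mathlib's `Matroid.eRk` on sets of finite rank, so its monotonicity
and submodularity are inherited from `eRk`. Once `F` is spanned by `A ∩ F`, the rank of `A` is the
rank of `A ∪ F`, which the uniform contraction `M / F` computes. -/

namespace Matroid

variable {M : Matroid α} {X Y : Set α}

lemma IsRkFinite.cast_nrk (h : M.IsRkFinite X) : (M.nrk X : ℕ∞) = M.eRk X := by
  obtain ⟨I, hI, hIfin⟩ := h.exists_finite_isBasis'
  have hgreatest : IsGreatest (ncard '' {J | M.Indep J ∧ J ⊆ X}) I.ncard := by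
    refine ⟨⟨I, ⟨hI.indep, hI.subset⟩, rfl⟩, ?_⟩
    rintro _ ⟨J, ⟨hJ, hJX⟩, rfl⟩
    have hJfin : J.Finite := h.finite_of_indep_subset hJ hJX
    have hle : J.encard ≤ I.encard := hI.encard_eq_eRk ▸ hJ.encard_le_eRk_of_subset hJX
    rwa [← hJfin.cast_ncard_eq, ← hIfin.cast_ncard_eq, Nat.cast_le] at hle
  rw [nrk, hgreatest.csSup_eq, hIfin.cast_ncard_eq, hI.encard_eq_eRk]

lemma cast_nrk_eq (M : Matroid α) [M.RankFinite] (X : Set α) : (M.nrk X : ℕ∞) = M.eRk X :=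
  (M.isRkFinite_set X).cast_nrk

lemma nrk_mono (M : Matroid α) [M.RankFinite] : Monotone M.nrk := by
  intro X Y hXY
  have h := M.eRk_mono hXY
  rwa [← cast_nrk_eq, ← cast_nrk_eq, Nat.cast_le] at h

lemma nrk_le_nRank (M : Matroid α) [M.RankFinite] (X : Set α) : M.nrk X ≤ M.nRank := by
  have h := M.eRk_le_eRank X
  rwa [eRank_def, ← cast_nrk_eq, ← cast_nrk_eq, Nat.cast_le] at h

lemma nrk_inter_add_nrk_union_le (M : Matroid α) [M.RankFinite] (X Y : Set α) :
    M.nrk (X ∩ Y) + M.nrk (X ∪ Y) ≤ M.nrk X + M.nrk Y := by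
  have h := M.eRk_inter_add_eRk_union_le X Y
  simp only [← cast_nrk_eq] at h
  exact_mod_cast h

lemma nrk_union_eq_of_nrk_inter_eq [M.RankFinite] (h : M.nrk (X ∩ Y) = M.nrk Y) :
    M.nrk (X ∪ Y) = M.nrk X := by
  have hsub := M.nrk_inter_add_nrk_union_le X Y
  have hmono := M.nrk_mono (subset_union_left : X ⊆ X ∪ Y)
  omega

end Matroid

namespace Matroid.StressedSubset

variable {M : Matroid α} {F A : Set α}

lemma nrk_inter_eq (hstr : M.StressedSubset F) (h : M.nrk F ≤ (A ∩ F).ncard) :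
    M.nrk (A ∩ F) = M.nrk F := by
  rw [hstr.1 (A ∩ F) inter_subset_right, min_eq_right h]

lemma nrk_union_eq (hstr : M.StressedSubset F) (hA : A ⊆ M.E) :
    M.nrk (A ∪ F) = M.nrk F + min (A \ F).ncard (M.nRank - M.nrk F) := by
  rw [← hstr.2 (A \ F) (sdiff_subset_sdiff_left hA), union_sdiff_self, union_comm]

end Matroid.StressedSubset

theorem rank_of_large_inter_stressed_general (M : Matroid α) (hfin : M.E.Finite) {F A : Set α}
    (hstr : M.StressedSubset F) (hA : A ⊆ M.E)
    (hint : M.nrk F + 1 ≤ (A ∩ F).ncard) :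
    M.nrk A = min M.nRank (M.nrk F + (A \ F).ncard) := by
  have : M.Finite := ⟨hfin⟩
  have hspan : M.nrk (A ∪ F) = M.nrk A :=
    Matroid.nrk_union_eq_of_nrk_inter_eq (hstr.nrk_inter_eq (by omega))
  have hunion := hstr.nrk_union_eq hA
  have hle := M.nrk_le_nRank F
  omega

/-- if `F` is a stressed subset of rank `r` of a rank-`k` matroid `M` and
`A ⊆ E` satisfies `|A ∩ F| ≥ r + 1`, then `rk_M(A) = min(k, r + |A ∖ F|)`. -/
theorem rank_of_large_inter_stressed (M : Matroid α) (hfin : M.E.Finite) {F A : Set α}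
    (hF : F ⊆ M.E) (hstr : M.StressedSubset F) (hA : A ⊆ M.E)
    (hint : M.nrk F + 1 ≤ (A ∩ F).ncard) :
    M.nrk A = min M.nRank (M.nrk F + (A \ F).ncard) :=
  rank_of_large_inter_stressed_general M hfin hstr hA hint
end

section
/- The normalized volume of the base polytope of the minimal matroid T_{k,n} equals (1/(n−1)!)·((n−2) choose (k−1)); equivalently, the number of permutations σ ∈ S_{n−1} with σ₁ < ⋯ < σ_{n−k} > σ_{n−k+1} > ⋯ > σ_{n−1} equals (n−2 choose k−1). -/
private def hdmap (m p : ℕ) (hpm : p ≤ m) (σ : Equiv.Perm (Fin m)) : Fin p → Fin m :=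
  fun j => σ ⟨j, lt_of_lt_of_le j.2 hpm⟩

private def Fmap (m p : ℕ) (hpm : p ≤ m) (σ : Equiv.Perm (Fin m)) : Finset (Fin m) :=
  Finset.image (hdmap m p hpm σ) Finset.univ

private def tdmap (m p : ℕ) (σ : Equiv.Perm (Fin m)) : Fin (m - p) → Fin m :=
  fun j => σ ⟨m - 1 - j, by have := j.2; omega⟩

private def gfun (m p : ℕ) (S : Finset (Fin m)) (hS : S.card = p) (hSc : Sᶜ.card = m - p) :
    Fin m → Fin m := fun i =>
  if h : (i : ℕ) < p then S.orderEmbOfFin hS ⟨i, h⟩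
  else Sᶜ.orderEmbOfFin hSc ⟨m - 1 - i, by have := i.2; omega⟩

set_option maxHeartbeats 2000000 in
theorem count_aux (m p : ℕ) (hp : 1 ≤ p) (hpm : p ≤ m) :
    Nat.card {σ : Equiv.Perm (Fin m) //
        (∀ i j : Fin m, i < j → (j : ℕ) < p → σ i < σ j) ∧
        (∀ i j : Fin m, i < j → p ≤ (i : ℕ) + 1 → σ j < σ i)} = (m - 1).choose (p - 1) := by
  classical
  have hm : 1 ≤ m := le_trans hp hpm
  have hm1 : m - 1 < m := by omega
  have hp1 : p - 1 < m := by omega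
  have htop_le : ∀ x : Fin m, x ≤ (⟨m - 1, hm1⟩ : Fin m) := by
    intro x
    have := x.2
    rw [Fin.le_def]
    show (x : ℕ) ≤ m - 1
    omega
  have hd_inj : ∀ σ, Function.Injective (hdmap m p hpm σ) := by
    intro σ a b hab
    have h1 := σ.injective hab
    exact Fin.ext (by simpa using h1)
  have hFcard : ∀ σ, (Fmap m p hpm σ).card = p := by
    intro σ
    rw [Fmap, Finset.card_image_of_injective _ (hd_inj σ), Finset.card_univ, Fintype.card_fin]
  have hFcardc : ∀ σ, (Fmap m p hpm σ)ᶜ.card = m - p := by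
    intro σ
    rw [Finset.card_compl, hFcard, Fintype.card_fin]
  have hdmem : ∀ σ, ∀ x : Fin p, hdmap m p hpm σ x ∈ Fmap m p hpm σ :=
    fun σ x => Finset.mem_image_of_mem _ (Finset.mem_univ _)
  have htopF : ∀ σ : Equiv.Perm (Fin m),
      (∀ i j : Fin m, i < j → p ≤ (i : ℕ) + 1 → σ j < σ i) →
      (⟨m - 1, hm1⟩ : Fin m) ∈ Fmap m p hpm σ := by
    intro σ h2
    obtain ⟨t, ht⟩ : ∃ t : Fin m, t = (⟨m - 1, hm1⟩ : Fin m) := ⟨_, rfl⟩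
    rw [← ht]
    have hσi0 : σ (σ.symm t) = t := σ.apply_symm_apply _
    have hi0p : ((σ.symm t : Fin m) : ℕ) < p := by
      by_contra hcon
      have hlt : (⟨p - 1, hp1⟩ : Fin m) < σ.symm t := by
        rw [Fin.lt_def]
        show p - 1 < ((σ.symm t : Fin m) : ℕ)
        omega
      have hval := h2 ⟨p - 1, hp1⟩ (σ.symm t) hlt
        (by show p ≤ p - 1 + 1; omega)
      rw [hσi0, ht] at hval
      exact absurd (htop_le (σ ⟨p - 1, hp1⟩)) (not_le.mpr hval)
    have heq : hdmap m p hpm σ ⟨_, hi0p⟩ = t :=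
      (congrArg σ (Fin.ext rfl)).trans hσi0
    exact heq ▸ hdmem σ _
  have hdmono : ∀ σ : Equiv.Perm (Fin m),
      (∀ i j : Fin m, i < j → (j : ℕ) < p → σ i < σ j) → StrictMono (hdmap m p hpm σ) := by
    intro σ h1 a b hab
    exact h1 _ _ (by rw [Fin.lt_def]; exact hab) b.2
  have tdmem : ∀ σ : Equiv.Perm (Fin m), ∀ x : Fin (m - p),
      tdmap m p σ x ∈ (Fmap m p hpm σ)ᶜ := by
    intro σ x
    rw [Finset.mem_compl, Fmap]
    intro hmem
    simp only [Finset.mem_image, Finset.mem_univ, true_and] at hmem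
    obtain ⟨j, hj⟩ := hmem
    rw [hdmap, tdmap] at hj
    have h1 := σ.injective hj
    have h2 : (j : ℕ) = m - 1 - (x : ℕ) := by simpa using h1
    have hx := x.2
    have hjp := j.2
    omega
  have tdmono : ∀ σ : Equiv.Perm (Fin m),
      (∀ i j : Fin m, i < j → p ≤ (i : ℕ) + 1 → σ j < σ i) → StrictMono (tdmap m p σ) := by
    intro σ h2 a b hab
    have hb := b.2
    have ha := a.2
    refine h2 ⟨m - 1 - b, by omega⟩ ⟨m - 1 - a, by omega⟩ ?_ ?_
    · rw [Fin.lt_def]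
      show m - 1 - (b : ℕ) < m - 1 - (a : ℕ)
      have : (a : ℕ) < b := hab
      omega
    · show p ≤ m - 1 - (b : ℕ) + 1
      omega
  -- the bijection
  have hbij : Function.Bijective
      (fun σ : {σ : Equiv.Perm (Fin m) //
        (∀ i j : Fin m, i < j → (j : ℕ) < p → σ i < σ j) ∧
        (∀ i j : Fin m, i < j → p ≤ (i : ℕ) + 1 → σ j < σ i)} =>
        (⟨Fmap m p hpm σ.1, hFcard σ.1, htopF σ.1 σ.2.2⟩ :
          {s : Finset (Fin m) // s.card = p ∧ (⟨m - 1, hm1⟩ : Fin m) ∈ s})) := by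
    constructor
    · rintro ⟨σ1, h11, h12⟩ ⟨σ2, h21, h22⟩ heq
      have hS : Fmap m p hpm σ1 = Fmap m p hpm σ2 := congrArg Subtype.val heq
      have hhd1 : hdmap m p hpm σ1 = (Fmap m p hpm σ1).orderEmbOfFin (hFcard σ1) :=
        Finset.orderEmbOfFin_unique (hFcard σ1) (hdmem σ1) (hdmono σ1 h11)
      have hhd2 : hdmap m p hpm σ2 = (Fmap m p hpm σ1).orderEmbOfFin (hFcard σ1) :=
        Finset.orderEmbOfFin_unique (hFcard σ1) (fun x => hS.symm ▸ hdmem σ2 x)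
          (hdmono σ2 h21)
      have hdeq : hdmap m p hpm σ1 = hdmap m p hpm σ2 := hhd1.trans hhd2.symm
      have htd1 : tdmap m p σ1 = (Fmap m p hpm σ1)ᶜ.orderEmbOfFin (hFcardc σ1) :=
        Finset.orderEmbOfFin_unique (hFcardc σ1) (tdmem σ1) (tdmono σ1 h12)
      have htd2 : tdmap m p σ2 = (Fmap m p hpm σ1)ᶜ.orderEmbOfFin (hFcardc σ1) :=
        Finset.orderEmbOfFin_unique (hFcardc σ1) (fun x => hS.symm ▸ tdmem σ2 x)
          (tdmono σ2 h22)
      have tdeq : tdmap m p σ1 = tdmap m p σ2 := htd1.trans htd2.symm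
      apply Subtype.ext
      apply Equiv.ext
      intro i
      by_cases hi : (i : ℕ) < p
      · have e1 : hdmap m p hpm σ1 ⟨i, hi⟩ = σ1 i := congrArg σ1 (Fin.ext rfl)
        have e2 : hdmap m p hpm σ2 ⟨i, hi⟩ = σ2 i := congrArg σ2 (Fin.ext rfl)
        rw [← e1, ← e2, hdeq]
      · have hii := i.2
        have hjlt : m - 1 - (i : ℕ) < m - p := by omega
        have e1 : tdmap m p σ1 ⟨m - 1 - i, hjlt⟩ = σ1 i := congrArg σ1 (Fin.ext (by
          show m - 1 - (m - 1 - (i : ℕ)) = (i : ℕ)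
          omega))
        have e2 : tdmap m p σ2 ⟨m - 1 - i, hjlt⟩ = σ2 i := congrArg σ2 (Fin.ext (by
          show m - 1 - (m - 1 - (i : ℕ)) = (i : ℕ)
          omega))
        rw [← e1, ← e2, tdeq]
    · rintro ⟨S, hScard, hStop⟩
      have hSc : Sᶜ.card = m - p := by
        rw [Finset.card_compl, hScard, Fintype.card_fin]
      have ginj : Function.Injective (gfun m p S hScard hSc) := by
        intro a b hab
        simp only [gfun] at hab
        by_cases ha : (a : ℕ) < p <;> by_cases hb : (b : ℕ) < p
        · rw [dif_pos ha, dif_pos hb] at hab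
          have h1 := (S.orderEmbOfFin hScard).injective hab
          exact Fin.ext (by simpa using h1)
        · rw [dif_pos ha, dif_neg hb] at hab
          have h1 := Finset.orderEmbOfFin_mem S hScard ⟨a, ha⟩
          have h2 := Finset.orderEmbOfFin_mem Sᶜ hSc ⟨m - 1 - b, by have := b.2; omega⟩
          rw [hab] at h1
          exact absurd h1 (Finset.mem_compl.mp h2)
        · rw [dif_neg ha, dif_pos hb] at hab
          have h1 := Finset.orderEmbOfFin_mem S hScard ⟨b, hb⟩
          have h2 := Finset.orderEmbOfFin_mem Sᶜ hSc ⟨m - 1 - a, by have := a.2; omega⟩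
          rw [← hab] at h1
          exact absurd h1 (Finset.mem_compl.mp h2)
        · rw [dif_neg ha, dif_neg hb] at hab
          have h1 := (Sᶜ.orderEmbOfFin hSc).injective hab
          have h2 : m - 1 - (a : ℕ) = m - 1 - (b : ℕ) := by simpa using h1
          have := a.2
          have := b.2
          exact Fin.ext (by omega)
      have gbij : Function.Bijective (gfun m p S hScard hSc) :=
        Finite.injective_iff_bijective.mp ginj
      have hσap : ∀ i, Equiv.ofBijective _ gbij i = gfun m p S hScard hSc i := fun i => rfl
      have hmaxS : S.orderEmbOfFin hScard ⟨p - 1, Nat.sub_lt hp Nat.one_pos⟩ =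
          (⟨m - 1, hm1⟩ : Fin m) := by
        rw [Finset.orderEmbOfFin_last hScard (by omega)]
        exact le_antisymm (htop_le _) (S.le_max' _ hStop)
      have hc1 : ∀ i j : Fin m, i < j → (j : ℕ) < p →
          Equiv.ofBijective _ gbij i < Equiv.ofBijective _ gbij j := by
        intro i j hij hjp
        have hip : (i : ℕ) < p := lt_trans (Fin.lt_def.mp hij) hjp
        simp only [hσap, gfun]
        rw [dif_pos hip, dif_pos hjp]
        exact (S.orderEmbOfFin hScard).strictMono (by rw [Fin.lt_def]; exact hij)
      have hc2 : ∀ i j : Fin m, i < j → p ≤ (i : ℕ) + 1 →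
          Equiv.ofBijective _ gbij j < Equiv.ofBijective _ gbij i := by
        intro i j hij hpi
        have hij' : (i : ℕ) < j := hij
        have hjm := j.2
        by_cases hip : (i : ℕ) < p
        · have hjp : ¬ (j : ℕ) < p := by omega
          simp only [hσap, gfun]
          rw [dif_pos hip, dif_neg hjp]
          have h2 := Finset.orderEmbOfFin_mem Sᶜ hSc ⟨m - 1 - j, by omega⟩
          have hne : Sᶜ.orderEmbOfFin hSc ⟨m - 1 - j, by omega⟩ ≠ (⟨m - 1, hm1⟩ : Fin m) := by
            intro hcon
            rw [hcon] at h2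
            exact absurd hStop (Finset.mem_compl.mp h2)
          have hie : S.orderEmbOfFin hScard ⟨(i : ℕ), hip⟩ = (⟨m - 1, hm1⟩ : Fin m) := by
            rw [← hmaxS]
            exact congrArg _ (Fin.ext (by show (i : ℕ) = p - 1; omega))
          rw [hie]
          exact lt_of_le_of_ne (htop_le _) hne
        · have hjp : ¬ (j : ℕ) < p := by omega
          simp only [hσap, gfun]
          rw [dif_neg hip, dif_neg hjp]
          refine (Sᶜ.orderEmbOfFin hSc).strictMono ?_
          rw [Fin.lt_def]
          show m - 1 - (j : ℕ) < m - 1 - (i : ℕ)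
          omega
      refine ⟨⟨Equiv.ofBijective _ gbij, hc1, hc2⟩, ?_⟩
      apply Subtype.ext
      show Fmap m p hpm (Equiv.ofBijective _ gbij) = S
      have himg : hdmap m p hpm (Equiv.ofBijective _ gbij) =
          fun j : Fin p => S.orderEmbOfFin hScard j := by
        funext j
        simp only [hdmap, hσap, gfun]
        rw [dif_pos (show ((⟨(j : ℕ), lt_of_lt_of_le j.2 hpm⟩ : Fin m) : ℕ) < p from j.2)]
      rw [Fmap, himg]
      apply Finset.coe_injective
      rw [Finset.coe_image, Finset.coe_univ, Set.image_univ]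
      exact Finset.range_orderEmbOfFin S hScard
  rw [Nat.card_eq_of_bijective _ hbij]
  -- count the subsets
  have e : {s : Finset (Fin m) // s.card = p ∧ (⟨m - 1, hm1⟩ : Fin m) ∈ s} ≃
      {s : Finset (Fin m) //
        s ∈ (Finset.univ.erase (⟨m - 1, hm1⟩ : Fin m)).powersetCard (p - 1)} := by
    refine ⟨fun s => ⟨s.1.erase (⟨m - 1, hm1⟩ : Fin m), ?_⟩, fun t => ⟨insert (⟨m - 1, hm1⟩ : Fin m) t.1, ?_⟩,
      ?_, ?_⟩
    · rw [Finset.mem_powersetCard]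
      exact ⟨Finset.erase_subset_erase _ (Finset.subset_univ _),
        by rw [Finset.card_erase_of_mem s.2.2, s.2.1]⟩
    · have ht := Finset.mem_powersetCard.mp t.2
      have htop_notmem : (⟨m - 1, hm1⟩ : Fin m) ∉ t.1 := fun hcon =>
        (Finset.mem_erase.mp (ht.1 hcon)).1 rfl
      refine ⟨by rw [Finset.card_insert_of_notMem htop_notmem, ht.2]; omega,
        Finset.mem_insert_self _ _⟩
    · rintro ⟨s, hs1, hs2⟩
      exact Subtype.ext (Finset.insert_erase hs2)
    · rintro ⟨t, ht⟩
      have ht' := Finset.mem_powersetCard.mp ht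
      have htop_notmem : (⟨m - 1, hm1⟩ : Fin m) ∉ t := fun hcon =>
        (Finset.mem_erase.mp (ht'.1 hcon)).1 rfl
      exact Subtype.ext (Finset.erase_insert htop_notmem)
  rw [Nat.card_congr e, Nat.card_eq_finsetCard, Finset.card_powersetCard,
    Finset.card_erase_of_mem (Finset.mem_univ _), Finset.card_univ, Fintype.card_fin]

/-- the normalized volume of the base polytope of the minimal matroid
`T_{k,n}` equals `(1/(n−1)!)·((n−2) choose (k−1))`; equivalently, the number of
permutations `σ` of `{1,…,n−1}` with `σ₁ < ⋯ < σ_{n−k} > σ_{n−k+1} > ⋯ > σ_{n−1}`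
(increasing on the first `n−k` positions, decreasing from position `n−k` on) equals
`(n−2) choose (k−1)`. -/
theorem minimal_matroid_volume_count (n k : ℕ) (hk : 1 ≤ k) (hkn : k ≤ n - 1) :
    Nat.card {σ : Equiv.Perm (Fin (n - 1)) //
        (∀ i j : Fin (n - 1), i < j → (j : ℕ) < n - k → σ i < σ j) ∧
        (∀ i j : Fin (n - 1), i < j → n - k ≤ (i : ℕ) + 1 → σ j < σ i)} =
      (n - 2).choose (k - 1) := by
  have h := count_aux (n - 1) (n - k) (by omega) (by omega)
  rw [h, show n - 1 - 1 = n - 2 from by omega, show n - k - 1 = (n - 2) - (k - 1) from by omega,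
    Nat.choose_symm (by omega)]
end

section
/- For positive integers k ≤ n and nonnegative integers t, the identity ∑_{j=0}^{t} ((n−k−1+j) choose j)·((k−1+j) choose j) = (1/((n−1) choose (k−1)))·((t+n−k) choose (n−k))·∑_{j=0}^{k−1} ((n−k−1+j) choose j)·((t+j) choose j) holds. -/
open Finset Nat

private lemma cast_choose_q (a b : ℕ) :
    (((a + b).choose b : ℕ) : ℚ) = ((a + b)! : ℚ) / ((a)! * (b)!) := by
  rw [Nat.cast_choose ℚ (Nat.le_add_left b a)]
  rw [Nat.add_sub_cancel]
  ring

private lemma choose_swap (a b : ℕ) : (a + b).choose b = (a + b).choose a := by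
  rw [← Nat.choose_symm (Nat.le_add_left b a), Nat.add_sub_cancel]

private lemma hockey (M K : ℕ) :
    ∑ j ∈ Finset.range (K + 1), (M + j).choose j = (M + K + 1).choose K := by
  induction K with
  | zero => simp
  | succ K ih =>
      rw [Finset.sum_range_succ, ih, show M + (K+1) = M + K + 1 by omega]
      exact (Nat.choose_succ_succ (M+K+1) K).symm

private lemma core (M K t : ℕ) :
    ((M+K+1).choose (K+1) : ℚ) *
        (((t+M+2).choose (M+1) : ℚ) * ((t+K+2).choose (K+1) : ℚ)
          - ((t+M+1).choose (M+1) : ℚ) * ((t+K+1).choose (K+1) : ℚ))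
    = ((M+t+1).choose (t+1) : ℚ) *
        (((M+K+2).choose (K+1) : ℚ) * ((K+t+2).choose (t+1) : ℚ)
          - ((M+K+1).choose K : ℚ) * ((K+t+1).choose (t+1) : ℚ)) := by
  have h1 : ((M+K+1).choose (K+1) : ℚ) = ((M+K+1)! : ℚ) / ((M)! * ((K+1))!) := by
    rw [show M+K+1 = M+(K+1) by omega]; exact cast_choose_q M (K+1)
  have h2 : ((t+M+2).choose (M+1) : ℚ) = ((t+M+2)! : ℚ) / (((t+1))! * ((M+1))!) := by
    rw [show t+M+2 = (t+1)+(M+1) by omega]; exact cast_choose_q (t+1) (M+1)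
  have h3 : ((t+K+2).choose (K+1) : ℚ) = ((t+K+2)! : ℚ) / (((t+1))! * ((K+1))!) := by
    rw [show t+K+2 = (t+1)+(K+1) by omega]; exact cast_choose_q (t+1) (K+1)
  have h4 : ((t+M+1).choose (M+1) : ℚ) = ((t+M+1)! : ℚ) / ((t)! * ((M+1))!) := by
    rw [show t+M+1 = t+(M+1) by omega]; exact cast_choose_q t (M+1)
  have h5 : ((t+K+1).choose (K+1) : ℚ) = ((t+K+1)! : ℚ) / ((t)! * ((K+1))!) := by
    rw [show t+K+1 = t+(K+1) by omega]; exact cast_choose_q t (K+1)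
  have h6 : ((M+t+1).choose (t+1) : ℚ) = ((M+t+1)! : ℚ) / ((M)! * ((t+1))!) := by
    rw [show M+t+1 = M+(t+1) by omega]; exact cast_choose_q M (t+1)
  have h7 : ((M+K+2).choose (K+1) : ℚ) = ((M+K+2)! : ℚ) / (((M+1))! * ((K+1))!) := by
    rw [show M+K+2 = (M+1)+(K+1) by omega]; exact cast_choose_q (M+1) (K+1)
  have h8 : ((K+t+2).choose (t+1) : ℚ) = ((K+t+2)! : ℚ) / (((K+1))! * ((t+1))!) := by
    rw [show K+t+2 = (K+1)+(t+1) by omega]; exact cast_choose_q (K+1) (t+1)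
  have h9 : ((M+K+1).choose K : ℚ) = ((M+K+1)! : ℚ) / (((M+1))! * ((K))!) := by
    rw [show M+K+1 = (M+1)+K by omega]; exact cast_choose_q (M+1) K
  have h10 : ((K+t+1).choose (t+1) : ℚ) = ((K+t+1)! : ℚ) / ((K)! * ((t+1))!) := by
    rw [show K+t+1 = K+(t+1) by omega]; exact cast_choose_q K (t+1)
  have f1 : ((t+M+2)! : ℚ) = (t+M+2) * ((t+M+1)! : ℚ) := by
    rw [show t+M+2 = (t+M+1)+1 by omega, Nat.factorial_succ]; push_cast; ring
  have f2 : ((t+K+2)! : ℚ) = (t+K+2) * ((t+K+1)! : ℚ) := by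
    rw [show t+K+2 = (t+K+1)+1 by omega, Nat.factorial_succ]; push_cast; ring
  have f3 : ((M+K+2)! : ℚ) = (M+K+2) * ((M+K+1)! : ℚ) := by
    rw [show M+K+2 = (M+K+1)+1 by omega, Nat.factorial_succ]; push_cast; ring
  have f4 : ((K+t+2)! : ℚ) = (K+t+2) * ((K+t+1)! : ℚ) := by
    rw [show K+t+2 = (K+t+1)+1 by omega, Nat.factorial_succ]; push_cast; ring
  have f5 : (((K+1))! : ℚ) = (K+1) * ((K)! : ℚ) := by
    rw [Nat.factorial_succ]; push_cast; ring
  have f6 : (((M+1))! : ℚ) = (M+1) * ((M)! : ℚ) := by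
    rw [Nat.factorial_succ]; push_cast; ring
  have f7 : (((t+1))! : ℚ) = (t+1) * ((t)! : ℚ) := by
    rw [Nat.factorial_succ]; push_cast; ring
  have g1 : ((M+t+1)! : ℚ) = ((t+M+1)! : ℚ) := by rw [show M+t+1 = t+M+1 by omega]
  have g2 : ((K+t+1)! : ℚ) = ((t+K+1)! : ℚ) := by rw [show K+t+1 = t+K+1 by omega]
  have g3 : ((K+t+2)! : ℚ) = ((t+K+2)! : ℚ) := by rw [show K+t+2 = t+K+2 by omega]
  rw [h1, h2, h3, h4, h5, h6, h7, h8, h9, h10, g3, f1, f2, f3, g1, g2, f5, f6, f7]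
  have nM : ((M)! : ℚ) ≠ 0 := by positivity
  have nK : ((K)! : ℚ) ≠ 0 := by positivity
  have nt : ((t)! : ℚ) ≠ 0 := by positivity
  have nMt : (((t+M+1))! : ℚ) ≠ 0 := by positivity
  have nKt : (((t+K+1))! : ℚ) ≠ 0 := by positivity
  have nMK : (((M+K+1))! : ℚ) ≠ 0 := by positivity
  field_simp
  ring

private lemma stepL (M K t : ℕ) :
    ((t+M+2).choose (M+1) : ℚ) *
        (∑ j ∈ Finset.range (K+1), ((M+j).choose j : ℚ) * ((t+1+j).choose j : ℚ))
    = ((t+M+1).choose (M+1) : ℚ) *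
        (∑ j ∈ Finset.range (K+1), ((M+j).choose j : ℚ) * ((t+j).choose j : ℚ))
      + ((M+K+1).choose K : ℚ) * ((M+t+1).choose (t+1) : ℚ) * ((K+t+1).choose (t+1) : ℚ) := by
  induction K with
  | zero =>
      simp only [Finset.sum_range_one, Nat.add_zero, Nat.choose_zero_right,
        Nat.zero_add, Nat.choose_self]
      push_cast
      have e1 : (t+M+2).choose (M+1) = (t+M+1).choose M + (t+M+1).choose (M+1) := by
        rw [show t+M+2 = (t+M+1)+1 by omega, Nat.choose_succ_succ]
      have e2 : (M+t+1).choose (t+1) = (t+M+1).choose M := by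
        rw [show M+t+1 = M+(t+1) by omega, choose_swap, show M+(t+1) = t+M+1 by omega]
      rw [e1, e2]
      push_cast; ring
  | succ K ih =>
      rw [Finset.sum_range_succ (f := fun j => ((M+j).choose j : ℚ) * ((t+1+j).choose j : ℚ)) (n := K+1),
        Finset.sum_range_succ (f := fun j => ((M+j).choose j : ℚ) * ((t+j).choose j : ℚ)) (n := K+1)]
      rw [show M+(K+1) = M+K+1 by omega, show t+1+(K+1) = t+K+2 by omega,
        show t+(K+1) = t+K+1 by omega, show M+K+1+1 = M+K+2 by omega,
        show K+1+t+1 = K+t+2 by omega]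
      have hc := core M K t
      linear_combination ih + hc

private lemma keyN (M K t : ℕ) :
    ((M+K+1).choose K : ℚ) *
        (∑ j ∈ Finset.range (t+1), ((M+j).choose j : ℚ) * ((K+j).choose j : ℚ))
    = ((t+M+1).choose (M+1) : ℚ) *
        (∑ j ∈ Finset.range (K+1), ((M+j).choose j : ℚ) * ((t+j).choose j : ℚ)) := by
  induction t with
  | zero =>
      simp only [Finset.sum_range_one, Nat.add_zero, Nat.choose_zero_right,
        Nat.zero_add, Nat.choose_self, Nat.cast_one, mul_one, one_mul]
      rw [← Nat.cast_sum, hockey]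
  | succ t ih =>
      rw [Finset.sum_range_succ]
      rw [show t+1+M+1 = t+M+2 by omega, show M+(t+1) = M+t+1 by omega,
        show K+(t+1) = K+t+1 by omega]
      have hs := stepL M K t
      linear_combination ih - hs

/-- the two expressions for the Ehrhart polynomial of the base polytope
of the minimal matroid `T_{k,n}` agree: for all nonnegative integers `t`,
`∑_{j=0}^{t} C(n−k−1+j, j)·C(k−1+j, j)
  = (1/C(n−1,k−1))·C(t+n−k, n−k)·∑_{j=0}^{k−1} C(n−k−1+j, j)·C(t+j, j)`. -/
theorem minimal_matroid_ehrhart_identity (n k : ℕ) (hk : 1 ≤ k) (hkn : k ≤ n - 1)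
    (t : ℕ) :
    (∑ j ∈ Finset.range (t + 1),
        (((n - k - 1 + j).choose j : ℚ) * ((k - 1 + j).choose j : ℚ))) =
      (1 / (((n - 1).choose (k - 1) : ℚ))) * (((t + n - k).choose (n - k) : ℚ)) *
        ∑ j ∈ Finset.range k, (((n - k - 1 + j).choose j : ℚ) * ((t + j).choose j : ℚ)) := by
  obtain ⟨K, rfl⟩ : ∃ K, k = K + 1 := ⟨k - 1, by omega⟩
  obtain ⟨M, rfl⟩ : ∃ M, n = M + K + 2 := ⟨n - K - 2, by omega⟩
  rw [show M + K + 2 - (K + 1) - 1 = M by omega, show K + 1 - 1 = K by omega,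
    show M + K + 2 - 1 = M + K + 1 by omega,
    show t + (M + K + 2) - (K + 1) = t + M + 1 by omega,
    show M + K + 2 - (K + 1) = M + 1 by omega]
  have h := keyN M K t
  have hC : ((M+K+1).choose K : ℚ) ≠ 0 := by
    have := Nat.choose_pos (show K ≤ M+K+1 by omega)
    positivity
  field_simp
  linear_combination h
end

section
/- The Ehrhart polynomial of the hypersimplex Δ_{k,n} is given by ehr(Δ_{k,n}, t) = ∑_{j=0}^{k−1} (−1)^j · (n choose j) · ((k−j)t + n−1−j choose n−1) for all nonnegative integers t. -/
open Finset

noncomputable instance fintypeFinPiSumEq (n m : ℕ) :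
    Fintype {y : Fin n → ℕ // ∑ i, y i = m} :=
  Fintype.ofEquiv _ (Sym.equivNatSumOfFintype (Fin n) m)

lemma aux_card_sum_eq (n m : ℕ) (hn : 1 ≤ n) :
    Nat.card {y : Fin n → ℕ // ∑ i, y i = m} = (m + (n - 1)).choose (n - 1) := by
  have h2 : n + m - 1 = m + (n - 1) := by omega
  have h1 : Nat.card {y : Fin n → ℕ // ∑ i, y i = m} = Fintype.card (Sym (Fin n) m) :=
    (Nat.card_eq_fintype_card).trans (Fintype.card_congr (Sym.equivNatSumOfFintype (Fin n) m)).symm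
  rw [h1, Sym.card_sym_eq_multichoose, Fintype.card_fin, Nat.multichoose_eq, h2,
    Nat.choose_symm_add]

lemma aux_sum_ind (n t : ℕ) (A : Finset (Fin n)) :
    ∑ i : Fin n, (if i ∈ A then t + 1 else 0) = #A * (t + 1) := by
  rw [Finset.sum_ite_mem, Finset.univ_inter, Finset.sum_const, smul_eq_mul]

lemma aux_card_ge (n t m : ℕ) (A : Finset (Fin n)) (h : #A * (t + 1) ≤ m) :
    Nat.card {y : Fin n → ℕ // (∀ i ∈ A, t + 1 ≤ y i) ∧ ∑ i, y i = m} =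
      Nat.card {z : Fin n → ℕ // ∑ i, z i = m - #A * (t + 1)} := by
  apply Nat.card_congr
  refine ⟨fun y => ⟨fun i => y.1 i - if i ∈ A then t + 1 else 0, ?_⟩,
          fun z => ⟨fun i => z.1 i + if i ∈ A then t + 1 else 0, ?_, ?_⟩, ?_, ?_⟩
  · rw [Finset.sum_tsub_distrib _ (fun i _ => ?_), y.2.2, aux_sum_ind]
    split_ifs with hi
    · exact y.2.1 i hi
    · exact Nat.zero_le _
  · intro i hi; simp [hi]
  · rw [Finset.sum_add_distrib, z.2, aux_sum_ind]; omega
  · rintro ⟨y, hy1, hy2⟩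
    ext i
    simp only
    split_ifs with hi
    · have := hy1 i hi; omega
    · omega
  · rintro ⟨z, hz⟩
    ext i
    simp only
    split_ifs <;> omega

lemma aux_card_lt (n t m : ℕ) (A : Finset (Fin n)) (h : m < #A * (t + 1)) :
    Nat.card {y : Fin n → ℕ // (∀ i ∈ A, t + 1 ≤ y i) ∧ ∑ i, y i = m} = 0 := by
  rw [Nat.card_eq_zero]
  left
  constructor
  rintro ⟨y, hy1, hy2⟩
  have hle : #A * (t + 1) ≤ ∑ i, y i := by
    calc #A * (t + 1) = ∑ _i ∈ A, (t + 1) := by rw [sum_const, smul_eq_mul]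
    _ ≤ ∑ i ∈ A, y i := Finset.sum_le_sum hy1
    _ ≤ ∑ i, y i := Finset.sum_le_sum_of_subset (subset_univ A)
  omega

lemma aux_mem_inf {ι α : Type*} [DecidableEq α] [Fintype α] {s : Finset ι} {f : ι → Finset α}
    {a : α} : a ∈ s.inf f ↔ ∀ i ∈ s, a ∈ f i := by
  induction s using Finset.cons_induction <;> simp [*, Finset.top_eq_univ]

lemma aux_filter_card (n m : ℕ) (P : (Fin n → ℕ) → Prop) [DecidablePred P] :
    #(univ.filter fun a : {y : Fin n → ℕ // ∑ i, y i = m} => P a.1) =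
      Nat.card {y : Fin n → ℕ // P y ∧ ∑ i, y i = m} := by
  rw [← Fintype.card_subtype, ← Nat.card_eq_fintype_card]
  exact Nat.card_congr ⟨fun a => ⟨a.1.1, a.2, a.1.2⟩, fun y => ⟨⟨y.1, y.2.2⟩, y.2.1⟩,
    fun _ => rfl, fun _ => rfl⟩

lemma aux_ie (n t m : ℕ) :
    (Nat.card {y : Fin n → ℕ // (∀ i, y i ≤ t) ∧ ∑ i, y i = m} : ℤ) =
      ∑ A ∈ (univ : Finset (Fin n)).powerset, (-1 : ℤ) ^ #A *
        Nat.card {y : Fin n → ℕ // (∀ i ∈ A, t + 1 ≤ y i) ∧ ∑ i, y i = m} := by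
  classical
  set S : Fin n → Finset {y : Fin n → ℕ // ∑ i, y i = m} :=
    fun i => univ.filter fun y => t + 1 ≤ y.1 i with hS
  have h1 : (univ : Finset (Fin n)).inf (fun i => (S i)ᶜ)
      = univ.filter fun a => ∀ i, a.1 i ≤ t := by
    ext a
    simp only [aux_mem_inf, Finset.mem_compl, Finset.mem_filter, Finset.mem_univ, true_and, hS,
      not_le, Nat.lt_succ_iff]
    tauto
  have h2 : ∀ A : Finset (Fin n), A.inf S = univ.filter fun a => ∀ i ∈ A, t + 1 ≤ a.1 i := by
    intro A; ext a
    simp [aux_mem_inf, hS]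
  rw [show (Nat.card {y : Fin n → ℕ // (∀ i, y i ≤ t) ∧ ∑ i, y i = m} : ℕ)
      = #((univ : Finset (Fin n)).inf fun i => (S i)ᶜ) by
    rw [h1, aux_filter_card n m (fun y => ∀ i, y i ≤ t)]]
  rw [Finset.inclusion_exclusion_card_inf_compl]
  refine Finset.sum_congr rfl fun A _ => ?_
  rw [h2 A, aux_filter_card n m (fun y => ∀ i ∈ A, t + 1 ≤ y i)]



/-- Katzman: the Ehrhart polynomial of the hypersimplex `Δ_{k,n}`.
For every nonnegative integer `t`, the number of lattice points of `t·Δ_{k,n}`, i.e. the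
number of vectors `y ∈ {0,…,t}ⁿ` with `y₁ + ⋯ + y_n = k·t`, equals
`∑_{j=0}^{k−1} (−1)^j·(n choose j)·((k−j)t + n−1−j choose n−1)`. -/
theorem hypersimplex_ehrhart (n k : ℕ) (hk : 1 ≤ k) (hkn : k ≤ n) (t : ℕ) :
    (Nat.card {y : Fin n → ℕ // (∀ i, y i ≤ t) ∧ ∑ i, y i = k * t} : ℤ) =
      ∑ j ∈ Finset.range k,
        (-1 : ℤ) ^ j * (n.choose j : ℤ) * (((k - j) * t + (n - 1 - j)).choose (n - 1) : ℤ) := by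
  classical
  have hn : 1 ≤ n := hk.trans hkn
  set N : ℕ → ℤ := fun j => if j * (t + 1) ≤ k * t
    then (((k * t - j * (t + 1)) + (n - 1)).choose (n - 1) : ℤ) else 0 with hNdef
  have hcard : ∀ A : Finset (Fin n),
      (Nat.card {y : Fin n → ℕ // (∀ i ∈ A, t + 1 ≤ y i) ∧ ∑ i, y i = k * t} : ℤ) = N #A := by
    intro A
    by_cases hle : #A * (t + 1) ≤ k * t
    · rw [aux_card_ge n t (k * t) A hle, aux_card_sum_eq n _ hn, hNdef]
      simp [hle]
    · rw [aux_card_lt n t (k * t) A (by omega), hNdef]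
      simp [hle]
  have hN0 : ∀ j, k ≤ j → N j = 0 := by
    intro j hj
    have hj1 : 1 ≤ j := hk.trans hj
    have h1 : j * (t + 1) = j * t + j := by ring
    have h2 : k * t ≤ j * t := Nat.mul_le_mul_right t hj
    rw [hNdef]
    simp only
    rw [if_neg (by omega)]
  have hNlt : ∀ j, j < k → N j = ((((k - j) * t + (n - 1 - j))).choose (n - 1) : ℤ) := by
    intro j hj
    have e1 : (k - j) * t = k * t - j * t := Nat.sub_mul k j t
    have e2 : j * (t + 1) = j * t + j := by ring
    have e3 : j * t ≤ k * t := Nat.mul_le_mul_right t hj.le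
    have hjn : j + 1 ≤ n := lt_of_lt_of_le hj hkn
    rw [hNdef]
    simp only
    split_ifs with hle
    · have he : k * t - j * (t + 1) + (n - 1) = (k - j) * t + (n - 1 - j) := by omega
      rw [he]
    · have hlt : (k - j) * t + (n - 1 - j) < n - 1 := by omega
      rw [Nat.choose_eq_zero_of_lt hlt]
      simp
  rw [aux_ie n t (k * t)]
  calc ∑ A ∈ (univ : Finset (Fin n)).powerset, (-1 : ℤ) ^ #A *
        Nat.card {y : Fin n → ℕ // (∀ i ∈ A, t + 1 ≤ y i) ∧ ∑ i, y i = k * t}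
      = ∑ j ∈ Finset.range (n + 1), (n.choose j : ℤ) * ((-1) ^ j * N j) := by
        rw [Finset.sum_powerset]
        rw [card_univ, Fintype.card_fin]
        refine Finset.sum_congr rfl fun j _ => ?_
        calc ∑ A ∈ Finset.powersetCard j (univ : Finset (Fin n)), (-1 : ℤ) ^ #A *
              Nat.card {y : Fin n → ℕ // (∀ i ∈ A, t + 1 ≤ y i) ∧ ∑ i, y i = k * t}
            = ∑ _A ∈ Finset.powersetCard j (univ : Finset (Fin n)), ((-1 : ℤ) ^ j * N j) := by
              refine Finset.sum_congr rfl fun A hA => ?_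
              obtain ⟨-, hAcard⟩ := Finset.mem_powersetCard.1 hA
              rw [hcard A, hAcard]
          _ = (n.choose j : ℤ) * ((-1) ^ j * N j) := by
              rw [Finset.sum_const, Finset.card_powersetCard, card_univ, Fintype.card_fin,
                nsmul_eq_mul]
    _ = ∑ j ∈ Finset.range k, (n.choose j : ℤ) * ((-1) ^ j * N j) := by
        refine (Finset.sum_subset (Finset.range_subset_range.2 (by omega)) fun j _ hjk => ?_).symm
        rw [hN0 j (by simpa using hjk)]
        ring
    _ = ∑ j ∈ Finset.range k,
        (-1 : ℤ) ^ j * (n.choose j : ℤ) * (((k - j) * t + (n - 1 - j)).choose (n - 1) : ℤ) := by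
        refine Finset.sum_congr rfl fun j hj => ?_
        rw [hNlt j (Finset.mem_range.1 hj)]
        ring
end

section
/- For integers 3 ≤ n−k ≤ k ≤ n−3, the inequalities (1/(k+1))·(n choose k) ≤ ((n−2) choose (k−1)) and ((n−2) choose (k−1)) ≤ ((n−3) choose (k−2))·(n−k−1) hold. Consequently (1/(k+1))(n choose k) ≤ ((n−3) choose (k−2))(n−k−1). -/
lemma speyer_aux1 (c d : ℕ) (hdc : d ≤ c) :
    (c + d + 6).choose (c + 3) ≤ (c + 4) * (c + d + 4).choose (c + 2) := by
  have i1 : (c + d + 6) * (c + d + 5).choose (c + 2) =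
      (c + d + 6).choose (c + 3) * (c + 3) := by
    simpa using Nat.add_one_mul_choose_eq (c + d + 5) (c + 2)
  have i2 : (c + d + 4).choose (c + 2) * (c + d + 5) =
      (c + d + 5).choose (c + 2) * (d + 3) := by
    have := Nat.choose_mul_succ_eq (c + d + 4) (c + 2)
    have e : c + d + 4 + 1 - (c + 2) = d + 3 := by omega
    simpa [e] using this
  have key : (c + d + 6).choose (c + 3) * ((c + 3) * (d + 3)) =
      (c + d + 6) * (c + d + 5) * (c + d + 4).choose (c + 2) := by
    calc (c + d + 6).choose (c + 3) * ((c + 3) * (d + 3))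
        = ((c + d + 6).choose (c + 3) * (c + 3)) * (d + 3) := by ring
      _ = ((c + d + 6) * (c + d + 5).choose (c + 2)) * (d + 3) := by rw [i1]
      _ = (c + d + 6) * ((c + d + 5).choose (c + 2) * (d + 3)) := by ring
      _ = (c + d + 6) * ((c + d + 4).choose (c + 2) * (c + d + 5)) := by rw [i2]
      _ = (c + d + 6) * (c + d + 5) * (c + d + 4).choose (c + 2) := by ring
  have harith : (c + d + 6) * (c + d + 5) ≤ (c + 4) * ((c + 3) * (d + 3)) := by
    nlinarith [Nat.mul_le_mul_right d hdc, sq_nonneg c, sq_nonneg d]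
  have h := Nat.mul_le_mul_right ((c + d + 4).choose (c + 2)) harith
  have h2 : (c + d + 6).choose (c + 3) * ((c + 3) * (d + 3)) ≤
      ((c + 4) * (c + d + 4).choose (c + 2)) * ((c + 3) * (d + 3)) := by
    calc (c + d + 6).choose (c + 3) * ((c + 3) * (d + 3))
        = (c + d + 6) * (c + d + 5) * (c + d + 4).choose (c + 2) := key
      _ ≤ (c + 4) * ((c + 3) * (d + 3)) * (c + d + 4).choose (c + 2) := h
      _ = ((c + 4) * (c + d + 4).choose (c + 2)) * ((c + 3) * (d + 3)) := by ring
  exact Nat.le_of_mul_le_mul_right h2 (by positivity)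

lemma speyer_aux2 (c d : ℕ) :
    (c + d + 4).choose (c + 2) ≤ (c + d + 3).choose (c + 1) * (d + 2) := by
  have i1 : (c + d + 4) * (c + d + 3).choose (c + 1) =
      (c + d + 4).choose (c + 2) * (c + 2) := by
    simpa using Nat.add_one_mul_choose_eq (c + d + 3) (c + 1)
  have h2 : (c + d + 4).choose (c + 2) * (c + 2) ≤
      ((c + d + 3).choose (c + 1) * (d + 2)) * (c + 2) := by
    calc (c + d + 4).choose (c + 2) * (c + 2)
        = (c + d + 4) * (c + d + 3).choose (c + 1) := i1.symm
      _ ≤ ((d + 2) * (c + 2)) * (c + d + 3).choose (c + 1) := by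
          have : c + d + 4 ≤ (d + 2) * (c + 2) := by nlinarith
          exact Nat.mul_le_mul_right _ this
      _ = ((c + d + 3).choose (c + 1) * (d + 2)) * (c + 2) := by ring
  exact Nat.le_of_mul_le_mul_right h2 (by positivity)

/-- for integers `3 ≤ n−k ≤ k ≤ n−3` the binomial inequalities
`(1/(k+1))·(n choose k) ≤ (n−2 choose k−1)` and
`(n−2 choose k−1) ≤ (n−3 choose k−2)·(n−k−1)` hold; consequently
`(1/(k+1))·(n choose k) ≤ (n−3 choose k−2)·(n−k−1)`. -/
theorem speyer_binomial_inequalities (n k : ℕ) (h1 : 3 ≤ n - k) (h2 : n - k ≤ k)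
    (h3 : k ≤ n - 3) :
    (1 / ((k : ℚ) + 1)) * (n.choose k : ℚ) ≤ ((n - 2).choose (k - 1) : ℚ) ∧
    ((n - 2).choose (k - 1) : ℚ) ≤ ((n - 3).choose (k - 2) : ℚ) * ((n - k - 1 : ℕ) : ℚ) ∧
    (1 / ((k : ℚ) + 1)) * (n.choose k : ℚ) ≤
      ((n - 3).choose (k - 2) : ℚ) * ((n - k - 1 : ℕ) : ℚ) := by
  obtain ⟨c, d, hk, hn⟩ : ∃ c d, k = c + 3 ∧ n = c + d + 6 :=
    ⟨k - 3, n - k - 3, by omega, by omega⟩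
  subst hk; subst hn
  have hdc : d ≤ c := by omega
  have e1 : c + d + 6 - 2 = c + d + 4 := by omega
  have e2 : c + 3 - 1 = c + 2 := by omega
  have e3 : c + d + 6 - 3 = c + d + 3 := by omega
  have e4 : c + 3 - 2 = c + 1 := by omega
  have e5 : c + d + 6 - (c + 3) - 1 = d + 2 := by omega
  rw [e1, e2, e3, e4, e5]
  have hA : (c + d + 6).choose (c + 3) ≤ (c + 4) * (c + d + 4).choose (c + 2) :=
    speyer_aux1 c d hdc
  have hB : (c + d + 4).choose (c + 2) ≤ (c + d + 3).choose (c + 1) * (d + 2) :=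
    speyer_aux2 c d
  have hpos : (0 : ℚ) < ((c + 3 : ℕ) : ℚ) + 1 := by positivity
  have hA' : (1 / (((c + 3 : ℕ) : ℚ) + 1)) * ((c + d + 6).choose (c + 3) : ℚ) ≤
      ((c + d + 4).choose (c + 2) : ℚ) := by
    rw [div_mul_eq_mul_div, div_le_iff₀ hpos]
    have hq : ((c + d + 6).choose (c + 3) : ℚ) ≤
        ((c : ℚ) + 4) * ((c + d + 4).choose (c + 2) : ℚ) := by exact_mod_cast hA
    push_cast
    nlinarith [hq]
  have hB' : ((c + d + 4).choose (c + 2) : ℚ) ≤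
      ((c + d + 3).choose (c + 1) : ℚ) * ((d + 2 : ℕ) : ℚ) := by
    exact_mod_cast hB
  exact ⟨by exact_mod_cast hA', hB', le_trans hA' hB'⟩
end
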